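/- arXiv:2105.00936 — 2 statements merged into one kernel-verified Lean document; each statement's English description precedes it below -/
import Mathlib

section
/- The map π^{B∨} is an involution of F, i.e. (π^{B∨})² = id, and conjugation by π^{B∨} implements the flip of the extended Dynkin diagram of type C_n: π^{B∨} ∘ s_i ∘ π^{B∨} = s_{n−i} for every i = 0, 1, …, n. -/
noncomputable section

namespace CvC

/-- Ambient space `F = ℝⁿ ⊕ ℝc`. -/
abbrev F (n : ℕ) := (Fin n → ℝ) × ℝ

/-- Bilinear form `⟨v + rc, w + sc⟩ = v ⬝ w`. -/
def bform (n : ℕ) (x y : F n) : ℝ := ∑ i, x.1 i * y.1 i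

/-- The constant function `c`. -/
def cvec (n : ℕ) : F n := (0, 1)

/-- `eps n i` is the basis vector `ε_i`, for `1 ≤ i ≤ n` (1-based; junk value `0` out of range). -/
def eps (n i : ℕ) : F n :=
  if h : 1 ≤ i ∧ i ≤ n then (Pi.single (⟨i - 1, by omega⟩ : Fin n) 1, 0) else 0

lemma bform_add_left (n : ℕ) (x y z : F n) :
    bform n (x + y) z = bform n x z + bform n y z := by
  simp [bform, add_mul, Finset.sum_add_distrib]

lemma bform_smul_left (n : ℕ) (c : ℝ) (x z : F n) :
    bform n (c • x) z = c * bform n x z := by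
  simp [bform, Finset.mul_sum, mul_assoc]

lemma bform_sub_left (n : ℕ) (x y z : F n) :
    bform n (x - y) z = bform n x z - bform n y z := by
  simp [bform, sub_mul, Finset.sum_sub_distrib]

/-- Reflection `s_f(g) = g − ⟨g, f^∨⟩ f`, `f^∨ = (2/⟨f,f⟩) f`, as a linear endomorphism. -/
def reflMap (n : ℕ) (f : F n) : Module.End ℝ (F n) where
  toFun g := g - ((2 / bform n f f) * bform n g f) • f
  map_add' x y := by
    try dsimp only
    rw [bform_add_left, mul_add, add_smul]; abel
  map_smul' c x := by
    try dsimp only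
    simp only [RingHom.id_apply]
    rw [bform_smul_left, smul_sub, smul_smul, mul_left_comm]

@[simp] lemma reflMap_apply (n : ℕ) (f g : F n) :
    reflMap n f g = g - ((2 / bform n f f) * bform n g f) • f := rfl

lemma reflMap_invol (n : ℕ) (f : F n) (hf : bform n f f ≠ 0) (g : F n) :
    reflMap n f (reflMap n f g) = g := by
  simp only [reflMap_apply]
  rw [bform_sub_left, bform_smul_left, sub_sub, ← add_smul]
  have key : (2 / bform n f f) * bform n g f +
      (2 / bform n f f) * (bform n g f - (2 / bform n f f) * bform n g f * bform n f f) = 0 := by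
    field_simp
    ring
  rw [key, zero_smul, sub_zero]

/-- Translation `t(v)(f) = f − ⟨f, v⟩c`, as a linear endomorphism. -/
def tMap (n : ℕ) (v : Fin n → ℝ) : Module.End ℝ (F n) where
  toFun g := g - bform n g (v, 0) • cvec n
  map_add' x y := by
    try dsimp only
    rw [bform_add_left, add_smul]; abel
  map_smul' c x := by
    try dsimp only
    simp only [RingHom.id_apply]
    rw [bform_smul_left, smul_sub, smul_smul]

@[simp] lemma tMap_apply (n : ℕ) (v : Fin n → ℝ) (g : F n) :
    tMap n v g = g - bform n g (v, 0) • cvec n := rfl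

lemma bform_pair_add (n : ℕ) (g : F n) (v w : Fin n → ℝ) :
    bform n g (v + w, 0) = bform n g (v, 0) + bform n g (w, 0) := by
  simp [bform, mul_add, Finset.sum_add_distrib]

lemma tMap_mul (n : ℕ) (v w : Fin n → ℝ) :
    tMap n v * tMap n w = tMap n (v + w) := by
  apply LinearMap.ext; intro g
  rw [Module.End.mul_apply]
  simp only [tMap_apply]
  rw [bform_sub_left, bform_smul_left]
  have hc : bform n (cvec n) (v, 0) = 0 := by simp [bform, cvec]
  rw [hc, mul_zero, sub_zero, bform_pair_add, add_smul]
  abel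

lemma tMap_zero (n : ℕ) : tMap n 0 = 1 := by
  apply LinearMap.ext; intro g
  rw [Module.End.one_apply, tMap_apply]
  have h0 : bform n g ((0 : Fin n → ℝ), 0) = 0 := by simp [bform]
  rw [h0, zero_smul, sub_zero]

/-- Translation `t(v)` as an invertible endomorphism. -/
def tU (n : ℕ) (v : Fin n → ℝ) : (Module.End ℝ (F n))ˣ where
  val := tMap n v
  inv := tMap n (-v)
  val_inv := by rw [tMap_mul, add_neg_cancel, tMap_zero]
  inv_val := by rw [tMap_mul, neg_add_cancel, tMap_zero]

/-- Reflection `s_f` as an invertible endomorphism (junk value `1` if `⟨f,f⟩ = 0`). -/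
def reflE (n : ℕ) (f : F n) : (Module.End ℝ (F n))ˣ :=
  if hf : bform n f f ≠ 0 then
    { val := reflMap n f
      inv := reflMap n f
      val_inv := by
        apply LinearMap.ext; intro g
        rw [Module.End.mul_apply, Module.End.one_apply]
        exact reflMap_invol n f hf g
      inv_val := by
        apply LinearMap.ext; intro g
        rw [Module.End.mul_apply, Module.End.one_apply]
        exact reflMap_invol n f hf g }
  else 1

/-- The simple affine roots `a_0, a_1, …, a_n` of type `(C_n^∨, C_n)`:
`a_0 = −2ε_1 + c`, `a_j = ε_j − ε_{j+1}` for `1 ≤ j ≤ n−1`, `a_n = 2ε_n`. -/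
def aRootF (n k : ℕ) : F n :=
  if k = 0 then (-(2:ℝ)) • eps n 1 + cvec n
  else if k = n then (2:ℝ) • eps n n
  else eps n k - eps n (k + 1)

/-- The generators `s_0, s_1, …, s_n` of the extended affine Weyl group of type
`(C_n^∨, C_n)`: `s_0 = t(ε_1) ∘ s_{2ε_1}` and `s_i = s_{a_i}` for `1 ≤ i ≤ n`. -/
def sgen (n k : ℕ) : (Module.End ℝ (F n))ˣ :=
  if k = 0 then tU n (eps n 1).1 * reflE n ((2:ℝ) • eps n 1)
  else reflE n (aRootF n k)

/-- The finite Weyl group `W_0 = ⟨s_1, …, s_n⟩` of type `C_n`. -/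
def W0grp (n : ℕ) : Subgroup (Module.End ℝ (F n))ˣ :=
  Subgroup.closure (sgen n '' Set.Icc 1 n)

/-- The extended affine Weyl group `W = ⟨s_0, s_1, …, s_n⟩` of type `(C_n^∨, C_n)`. -/
def Wgrp (n : ℕ) : Subgroup (Module.End ℝ (F n))ˣ :=
  Subgroup.closure (sgen n '' Set.Icc 0 n)

/-- Product of the generators `s_k` along a list of indices. -/
def du (n : ℕ) (l : List ℕ) : (Module.End ℝ (F n))ˣ := (l.map (sgen n)).prod

/-- The weight lattice `P_{C_n} = ℤε_1 ⊕ ⋯ ⊕ ℤε_n` (as a subset of `ℝⁿ`). -/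
def PC (n : ℕ) : Set (Fin n → ℝ) := { v | ∀ i, ∃ m : ℤ, v i = m }

/-- The weight lattice `P_{B_n} = P_{C_n} + ℤ·(1/2)(ε_1 + ⋯ + ε_n)` (as a subset of `ℝⁿ`). -/
def PB (n : ℕ) : Set (Fin n → ℝ) := { v | ∃ k : ℤ, ∀ i, ∃ m : ℤ, v i = m + (k : ℝ)/2 }

/-- `O_1 = {±ε_i + rc}`. -/
def O1 (n : ℕ) : Set (F n) :=
  { x | ∃ i, 1 ≤ i ∧ i ≤ n ∧ ∃ r : ℤ,
      x = eps n i + (r : ℝ) • cvec n ∨ x = -eps n i + (r : ℝ) • cvec n }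

/-- `O_2 = {±2ε_i + 2rc}`. -/
def O2 (n : ℕ) : Set (F n) :=
  { x | ∃ i, 1 ≤ i ∧ i ≤ n ∧ ∃ r : ℤ,
      x = (2:ℝ) • eps n i + ((2*r : ℤ) : ℝ) • cvec n ∨
      x = -((2:ℝ) • eps n i) + ((2*r : ℤ) : ℝ) • cvec n }

/-- `O_3 = {±ε_i + (r + 1/2)c}`. -/
def O3 (n : ℕ) : Set (F n) :=
  { x | ∃ i, 1 ≤ i ∧ i ≤ n ∧ ∃ r : ℤ,
      x = eps n i + ((r : ℝ) + 1/2) • cvec n ∨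
      x = -eps n i + ((r : ℝ) + 1/2) • cvec n }

/-- `O_4 = {±2ε_i + (2r+1)c}`. -/
def O4 (n : ℕ) : Set (F n) :=
  { x | ∃ i, 1 ≤ i ∧ i ≤ n ∧ ∃ r : ℤ,
      x = (2:ℝ) • eps n i + ((2*r+1 : ℤ) : ℝ) • cvec n ∨
      x = -((2:ℝ) • eps n i) + ((2*r+1 : ℤ) : ℝ) • cvec n }

/-- `O_5 = {±ε_i ± ε_j + rc, i < j}`. -/
def O5 (n : ℕ) : Set (F n) :=
  { x | ∃ i j, 1 ≤ i ∧ i < j ∧ j ≤ n ∧ ∃ r : ℤ,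
      x = eps n i + eps n j + (r : ℝ) • cvec n ∨
      x = eps n i - eps n j + (r : ℝ) • cvec n ∨
      x = -eps n i + eps n j + (r : ℝ) • cvec n ∨
      x = -eps n i - eps n j + (r : ℝ) • cvec n }

/-- The five `W`-orbits `O_1, …, O_5` of the affine root system of type `(C_n^∨, C_n)`. -/
def OO (n : ℕ) : Fin 5 → Set (F n) := ![O1 n, O2 n, O3 n, O4 n, O5 n]

/-- The affine root system `S` of type `(C_n^∨, C_n)`. -/
def Sset (n : ℕ) : Set (F n) := O1 n ∪ O2 n ∪ O3 n ∪ O4 n ∪ O5 n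

/-- The set `R̃₊ = {ε_i} ∪ {2ε_i} ∪ {ε_i ± ε_j : i < j}`. -/
def Rtplus (n : ℕ) : Set (F n) :=
  { x | (∃ i, 1 ≤ i ∧ i ≤ n ∧ (x = eps n i ∨ x = (2:ℝ) • eps n i)) ∨
        (∃ i j, 1 ≤ i ∧ i < j ∧ j ≤ n ∧ (x = eps n i + eps n j ∨ x = eps n i - eps n j)) }

/-- The set of positive affine roots `S⁺`. -/
def Splus (n : ℕ) : Set (F n) :=
  { x ∈ Sset n | 0 < x.2 } ∪ (Sset n ∩ Rtplus n)

lemma sum_single_mul (n : ℕ) (j : Fin n) (v : Fin n → ℝ) :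
    ∑ k, v k * (Pi.single j 1 : Fin n → ℝ) k = v j := by
  rw [Finset.sum_eq_single j]
  · simp
  · intro k _ hk
    simp [Pi.single_apply, hk]
  · intro h; exact absurd (Finset.mem_univ j) h

lemma bform_eps_right (n : ℕ) (x : F n) (i : ℕ) (h1 : 1 ≤ i) (h2 : i ≤ n) :
    bform n x (eps n i) = x.1 ⟨i - 1, by omega⟩ := by
  unfold bform eps
  rw [dif_pos ⟨h1, h2⟩]
  exact sum_single_mul n _ x.1

lemma bform_eps_eps (n i : ℕ) (h1 : 1 ≤ i) (h2 : i ≤ n) :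
    bform n (eps n i) (eps n i) = 1 := by
  rw [bform_eps_right n _ i h1 h2]
  unfold eps
  rw [dif_pos ⟨h1, h2⟩]
  simp

/-- `π^{C∨} = π^D`: the linear map with `ε_1 ↦ c − ε_1`, `ε_i ↦ ε_i` (`i ≥ 2`), `c ↦ c`. -/
def piCMap (n : ℕ) : Module.End ℝ (F n) where
  toFun g := g - bform n g (eps n 1) • ((2:ℝ) • eps n 1 - cvec n)
  map_add' x y := by
    try dsimp only
    rw [bform_add_left, add_smul]; abel
  map_smul' c x := by
    try dsimp only
    simp only [RingHom.id_apply]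
    rw [bform_smul_left, smul_sub c, smul_smul]

@[simp] lemma piCMap_apply (n : ℕ) (g : F n) :
    piCMap n g = g - bform n g (eps n 1) • ((2:ℝ) • eps n 1 - cvec n) := rfl

lemma piCMap_invol (n : ℕ) (g : F n) : piCMap n (piCMap n g) = g := by
  rcases Nat.eq_zero_or_pos n with h0 | hpos
  · subst h0
    have he : eps 0 1 = 0 := by simp [eps]
    simp [piCMap_apply, he, bform]
  · have hE := bform_eps_eps n 1 le_rfl hpos
    have hc : bform n (cvec n) (eps n 1) = 0 := by simp [bform, cvec]
    simp only [piCMap_apply]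
    rw [bform_sub_left, bform_smul_left, bform_sub_left, bform_smul_left, hE, hc]
    rw [sub_sub, ← add_smul]
    have key : bform n g (eps n 1) +
        (bform n g (eps n 1) - bform n g (eps n 1) * (2 * 1 - 0)) = 0 := by ring
    rw [key, zero_smul, sub_zero]

/-- `π^{C∨}` as an invertible endomorphism. -/
def piCU (n : ℕ) : (Module.End ℝ (F n))ˣ where
  val := piCMap n
  inv := piCMap n
  val_inv := by
    apply LinearMap.ext; intro g
    rw [Module.End.mul_apply, Module.End.one_apply]
    exact piCMap_invol n g
  inv_val := by
    apply LinearMap.ext; intro g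
    rw [Module.End.mul_apply, Module.End.one_apply]
    exact piCMap_invol n g

/-- `π^{B∨}`: the linear map with `ε_i ↦ (1/2)c − ε_{n−i+1}` and `c ↦ c`. -/
def piBMap (n : ℕ) : Module.End ℝ (F n) where
  toFun g := (fun i => -(g.1 (Fin.rev i)), g.2 + (1/2) * ∑ i, g.1 i)
  map_add' x y := by
    try dsimp only
    refine Prod.ext ?_ ?_
    · funext i; simp [neg_add]; ring
    · simp [Finset.sum_add_distrib]; ring
  map_smul' c x := by
    try dsimp only
    simp only [RingHom.id_apply]
    refine Prod.ext ?_ ?_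
    · funext i; simp [mul_comm]
    · simp only [Prod.smul_snd, Prod.smul_fst, Pi.smul_apply, smul_eq_mul, Finset.mul_sum,
        mul_add]
      congr 1
      exact Finset.sum_congr rfl fun i _ => by ring

@[simp] lemma piBMap_apply (n : ℕ) (g : F n) :
    piBMap n g = (fun i => -(g.1 (Fin.rev i)), g.2 + (1/2) * ∑ i, g.1 i) := rfl

lemma piBMap_invol (n : ℕ) (g : F n) : piBMap n (piBMap n g) = g := by
  simp only [piBMap_apply]
  refine Prod.ext ?_ ?_
  · funext i; simp
  · have h : ∑ i, -(g.1 (Fin.rev i)) = -∑ i, g.1 i := by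
      rw [← Finset.sum_neg_distrib]
      exact Equiv.sum_comp (Equiv.mk Fin.rev Fin.rev Fin.rev_rev Fin.rev_rev) (fun i => -(g.1 i))
    dsimp only
    rw [h]
    ring

/-- `π^{B∨}` as an invertible endomorphism. -/
def piBU (n : ℕ) : (Module.End ℝ (F n))ˣ where
  val := piBMap n
  inv := piBMap n
  val_inv := by
    apply LinearMap.ext; intro g
    rw [Module.End.mul_apply, Module.End.one_apply]
    exact piBMap_invol n g
  inv_val := by
    apply LinearMap.ext; intro g
    rw [Module.End.mul_apply, Module.End.one_apply]
    exact piBMap_invol n g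

/-- The affine root `a_0^{C∨} = −(ε_1 + ε_2) + c` of Ram–Yip type `C_n^∨`. -/
def a0C (n : ℕ) : F n := -(eps n 1 + eps n 2) + cvec n

/-- The reflection `s_0^{C∨} = s_{a_0^{C∨}}`. -/
def s0C (n : ℕ) : (Module.End ℝ (F n))ˣ := reflE n (a0C n)

/-- The extended affine Weyl group of Ram–Yip type `C_n^∨`:
`W^{C∨,RY} = ⟨s_0^{C∨}, s_1, …, s_n, π^{C∨}⟩`. -/
def WCRY (n : ℕ) : Subgroup (Module.End ℝ (F n))ˣ :=
  Subgroup.closure ({s0C n, piCU n} ∪ sgen n '' Set.Icc 1 n)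

/-- The extended affine Weyl group of Ram–Yip type `B_n^∨`:
`W^{B∨,RY} = ⟨s_0, s_1, …, s_n, π^{B∨}⟩`. -/
def WBRY (n : ℕ) : Subgroup (Module.End ℝ (F n))ˣ :=
  Subgroup.closure (insert (piBU n) (sgen n '' Set.Icc 0 n))

/-- The subgroup generated by `W_0` together with all the translations `t(μ)`, `μ ∈ P_{B_n}`. -/
def WBtrans (n : ℕ) : Subgroup (Module.End ℝ (F n))ˣ :=
  Subgroup.closure ((sgen n '' Set.Icc 1 n) ∪ (tU n '' PB n))

/-- The defining relators of the extended affine Weyl group of type `(C_n^∨, C_n)`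
on the generators `σ_0, …, σ_n`. -/
def rels (n : ℕ) : Set (FreeGroup (Fin (n + 1))) :=
  { r | (∃ i : Fin (n+1), r = FreeGroup.of i * FreeGroup.of i) ∨
        (∃ i j : Fin (n+1), ((i:ℕ) + 1 < (j:ℕ) ∨ (j:ℕ) + 1 < (i:ℕ)) ∧
          r = FreeGroup.of i * FreeGroup.of j * (FreeGroup.of i)⁻¹ * (FreeGroup.of j)⁻¹) ∨
        (∃ i j : Fin (n+1), 1 ≤ (i:ℕ) ∧ (i:ℕ) ≤ n - 2 ∧ (j:ℕ) = (i:ℕ) + 1 ∧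
          r = FreeGroup.of i * FreeGroup.of j * FreeGroup.of i *
              ((FreeGroup.of j)⁻¹ * (FreeGroup.of i)⁻¹ * (FreeGroup.of j)⁻¹)) ∨
        (∃ i j : Fin (n+1), ((i:ℕ) = 0 ∨ (i:ℕ) = n - 1) ∧ (j:ℕ) = (i:ℕ) + 1 ∧
          r = FreeGroup.of i * FreeGroup.of j * FreeGroup.of i * FreeGroup.of j *
              ((FreeGroup.of i)⁻¹ * (FreeGroup.of j)⁻¹ * (FreeGroup.of i)⁻¹ *
                (FreeGroup.of j)⁻¹)) }


lemma bform_comm (n : ℕ) (x y : F n) : bform n x y = bform n y x := by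
  simp [bform, mul_comm]

lemma bform_add_right (n : ℕ) (x y z : F n) :
    bform n x (y + z) = bform n x y + bform n x z := by
  rw [bform_comm, bform_add_left, bform_comm n y, bform_comm n z]

lemma bform_smul_right (n : ℕ) (c : ℝ) (x z : F n) :
    bform n x (c • z) = c * bform n x z := by
  rw [bform_comm, bform_smul_left, bform_comm]

lemma bform_cvec_left (n : ℕ) (x : F n) : bform n (cvec n) x = 0 := by
  simp [bform, cvec]

lemma bform_cvec_right (n : ℕ) (x : F n) : bform n x (cvec n) = 0 := by
  rw [bform_comm]; exact bform_cvec_left n x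

lemma bform_piB (n : ℕ) (x y : F n) :
    bform n (piBMap n x) (piBMap n y) = bform n x y := by
  simp only [bform, piBMap_apply]
  have h := Equiv.sum_comp (Equiv.mk Fin.rev Fin.rev Fin.rev_rev Fin.rev_rev)
    (fun i => x.1 i * y.1 i)
  simp only [Equiv.coe_fn_mk] at h
  calc ∑ i, -(x.1 (Fin.rev i)) * -(y.1 (Fin.rev i))
      = ∑ i, x.1 (Fin.rev i) * y.1 (Fin.rev i) := by
        refine Finset.sum_congr rfl fun i _ => ?_; ring
    _ = _ := h

lemma piB_conj_reflMap (n : ℕ) (f g : F n) :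
    piBMap n (reflMap n f (piBMap n g)) = reflMap n (piBMap n f) g := by
  have hb : bform n (piBMap n g) f = bform n g (piBMap n f) := by
    conv_lhs => rw [← piBMap_invol n f]
    rw [bform_piB]
  have hff : bform n (piBMap n f) (piBMap n f) = bform n f f := bform_piB n f f
  rw [reflMap_apply, map_sub, map_smul]
  rw [show piBMap n (piBMap n g) = g from piBMap_invol n g]
  rw [reflMap_apply, hb, hff]

lemma piBU_mul_self (n : ℕ) : piBU n * piBU n = 1 := by
  apply Units.ext
  show ((piBU n).val * (piBU n).val) = (1 : Module.End ℝ (F n))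
  apply LinearMap.ext; intro g
  exact piBMap_invol n g

lemma piBU_conj_reflE (n : ℕ) (f : F n) :
    piBU n * reflE n f * piBU n = reflE n (piBMap n f) := by
  by_cases hf : bform n f f ≠ 0
  · have hf' : bform n (piBMap n f) (piBMap n f) ≠ 0 := by rw [bform_piB]; exact hf
    apply Units.ext
    show (piBU n).val * (reflE n f).val * (piBU n).val = (reflE n (piBMap n f)).val
    rw [reflE, reflE, dif_pos hf, dif_pos hf']
    apply LinearMap.ext; intro g
    exact piB_conj_reflMap n f g
  · have hf' : ¬ bform n (piBMap n f) (piBMap n f) ≠ 0 := by rw [bform_piB]; exact hf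
    rw [reflE, reflE, dif_neg hf, dif_neg hf', mul_one, piBU_mul_self]

lemma piB_cvec (n : ℕ) : piBMap n (cvec n) = cvec n := by
  refine Prod.ext ?_ ?_
  · funext i; simp [piBMap_apply, cvec]
  · simp [piBMap_apply, cvec]

lemma piB_eps (n i : ℕ) (h1 : 1 ≤ i) (h2 : i ≤ n) :
    piBMap n (eps n i) = ((1/2 : ℝ)) • cvec n - eps n (n - i + 1) := by
  have hr : 1 ≤ n - i + 1 ∧ n - i + 1 ≤ n := ⟨by omega, by omega⟩
  have he1 : eps n i = (Pi.single (⟨i - 1, by omega⟩ : Fin n) 1, 0) := by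
    rw [eps, dif_pos (show 1 ≤ i ∧ i ≤ n from ⟨h1, h2⟩)]
  have he2 : eps n (n - i + 1) =
      (Pi.single (⟨n - i + 1 - 1, by omega⟩ : Fin n) 1, 0) := by
    rw [eps, dif_pos hr]
  rw [he1, he2]
  refine Prod.ext ?_ ?_
  · funext j
    have hj := j.isLt
    have hrev : (Fin.rev j : ℕ) = n - (j + 1) := Fin.val_rev j
    simp only [piBMap_apply, cvec, Prod.smul_fst, Prod.fst_sub, Pi.sub_apply,
      Pi.smul_apply, smul_eq_mul, Pi.single_apply, Pi.zero_apply, Fin.ext_iff, hrev]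
    simp only [mul_zero]
    split_ifs with hA hB hB
    · norm_num
    · exact absurd (by omega : (j:ℕ) = n - i + 1 - 1) hB
    · exact absurd (by omega : n - ((j:ℕ) + 1) = i - 1) hA
    · norm_num
  · simp only [piBMap_apply, cvec, Prod.smul_snd, Prod.snd_sub, smul_eq_mul]
    rw [Finset.sum_pi_single']
    simp

lemma piB_aRoot (n : ℕ) (hn : 2 ≤ n) (k : ℕ) (hk : k ≤ n) :
    piBMap n (aRootF n k) = aRootF n (n - k) := by
  rcases eq_or_ne k 0 with rfl | hk0
  · rw [aRootF, if_pos rfl, aRootF, Nat.sub_zero, if_neg (by omega), if_pos rfl]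
    rw [map_add, map_smul, piB_eps n 1 le_rfl (by omega), piB_cvec]
    have h1 : n - 1 + 1 = n := by omega
    rw [h1]
    module
  · rcases eq_or_ne k n with hkn | hkn
    · rw [hkn, aRootF, if_neg (by omega), if_pos rfl, Nat.sub_self, aRootF, if_pos rfl]
      rw [map_smul, piB_eps n n (by omega) le_rfl]
      have h1 : n - n + 1 = 1 := by omega
      rw [h1]
      module
    · have hk1 : 1 ≤ k := by omega
      have hkn' : k < n := by omega
      rw [aRootF, if_neg hk0, if_neg hkn, aRootF, if_neg (by omega), if_neg (by omega)]
      rw [map_sub, piB_eps n k hk1 hk, piB_eps n (k+1) (by omega) (by omega)]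
      have h1 : n - (k + 1) + 1 = n - k := by omega
      have h2 : n - k + 1 = n - k + 1 := rfl
      rw [h1]
      module

lemma sgen_eq (n : ℕ) (hn : 1 ≤ n) (k : ℕ) : sgen n k = reflE n (aRootF n k) := by
  rcases eq_or_ne k 0 with rfl | h
  · have hE : bform n (eps n 1) (eps n 1) = 1 := bform_eps_eps n 1 le_rfl hn
    have hE2 : (eps n 1).2 = 0 := by rw [eps, dif_pos ⟨le_rfl, hn⟩]
    have hpair : (((eps n 1).1, (0:ℝ)) : F n) = eps n 1 := by rw [← hE2]
    have h4 : bform n ((2:ℝ) • eps n 1) ((2:ℝ) • eps n 1) = 4 := by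
      rw [bform_smul_left, bform_smul_right, hE]; norm_num
    have ha0 : bform n (aRootF n 0) (aRootF n 0) = 4 := by
      rw [aRootF, if_pos rfl, bform_add_left, bform_add_right, bform_add_right,
        bform_smul_left, bform_smul_right, bform_smul_left, bform_cvec_right,
        bform_cvec_left, bform_cvec_right, hE]
      norm_num
    have h4ne : bform n ((2:ℝ) • eps n 1) ((2:ℝ) • eps n 1) ≠ 0 := by rw [h4]; norm_num
    have ha0ne : bform n (aRootF n 0) (aRootF n 0) ≠ 0 := by rw [ha0]; norm_num
    apply Units.ext
    show (sgen n 0).val = (reflE n (aRootF n 0)).val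
    rw [sgen, if_pos rfl, Units.val_mul, reflE, reflE, dif_pos h4ne, dif_pos ha0ne]
    apply LinearMap.ext; intro g
    show tMap n (eps n 1).1 (reflMap n ((2:ℝ) • eps n 1) g) = reflMap n (aRootF n 0) g
    set b := bform n g (eps n 1) with hbdef
    have hg2 : bform n g ((2:ℝ) • eps n 1) = 2 * b := by rw [bform_smul_right]
    have hga : bform n g (aRootF n 0) = -2 * b := by
      rw [aRootF, if_pos rfl, bform_add_right, bform_smul_right, bform_cvec_right]
      ring
    rw [tMap_apply, reflMap_apply, reflMap_apply, h4, hg2, ha0, hga, hpair]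
    rw [bform_sub_left, bform_smul_left, bform_smul_left, hE]
    rw [aRootF, if_pos rfl]
    match_scalars <;> ring
  · rw [sgen, if_neg h]

/-- `π^{B∨}` is an involution and conjugation by it implements the flip of the
extended Dynkin diagram of type `C_n`: `π^{B∨} s_i π^{B∨} = s_{n−i}` for `0 ≤ i ≤ n`. -/
theorem piB_involution_and_diagram_flip (n : ℕ) (hn : 2 ≤ n) :
    piBU n * piBU n = 1 ∧
    (∀ i ≤ n, piBU n * sgen n i * piBU n = sgen n (n - i)) := by
  refine ⟨piBU_mul_self n, fun i hi => ?_⟩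
  rw [sgen_eq n (by omega) i, sgen_eq n (by omega) (n - i), piBU_conj_reflE,
    piB_aRoot n hn i hi]

end CvC
end
end

section
/- The group W^{C∨} = t(P_{B_n}) ⋊ W_0 preserves the affine root subsystem S^{C∨} = O_1 ∪ O_3 ∪ O_5 of type C_n^∨, and its orbits on S^{C∨} are precisely the two sets O_1 ∪ O_3 and O_5: each of these two sets is invariant under every element of W^{C∨}, they are disjoint, and for any two elements a, b in the same set there exists w ∈ W^{C∨} with w(a) = b. -/
noncomputable section

namespace CvC

/-- The group `W^{C∨} = t(P_{B_n}) ⋊ W_0`, generated by `W_0` and the translations `t(μ)`,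
`μ ∈ P_{B_n}`. -/
def WCvee (n : ℕ) : Subgroup (Module.End ℝ (F n))ˣ :=
  Subgroup.closure ((sgen n '' Set.Icc 1 n) ∪ (tU n '' PB n))

/-!
In coordinates `F = (Fin n → ℝ) × ℝ`, every `s_k` with `1 ≤ k ≤ n` acts on the `ℝⁿ`-component by a
signed permutation and fixes the `c`-coordinate, while `t(μ)` fixes the `ℝⁿ`-component `v` and
subtracts `v ⬝ μ` from the `c`-coordinate. So `O_1 ∪ O_3 = {±ε_j + (p/2)c}` and
`O_5 = {±ε_j ± ε_k + rc}` are stable under `W^{C∨}`: the coordinates of `μ ∈ P_{B_n}` all lie in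
`ℤ + K/2` for a single `K`, so `⟨±ε_j, μ⟩ ∈ ½ℤ` and `⟨±ε_j ± ε_k, μ⟩ ∈ ℤ`. Conversely, a
translation clears the `c`-coordinate of such a root, and since adjacent transpositions generate
the symmetric group, `W_0` contains every sign change and every coordinate permutation; these
move `±ε_j` to any `ε_i` and `±ε_j ± ε_k` to any `ε_i + ε_l`.
-/

open Set MulAction

section

variable {n : ℕ}

lemma eps_succ (j : Fin n) : eps n (j + 1) = (Pi.single j 1, 0) := by
  rw [eps, dif_pos ⟨by omega, j.isLt⟩]
  simp

lemma tU_apply (μ : Fin n → ℝ) (x : F n) :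
    (tU n μ : Module.End ℝ (F n)) x = (x.1, x.2 - x.1 ⬝ᵥ μ) := by
  ext <;> simp [tU, bform, cvec, dotProduct]

lemma tU_inv (μ : Fin n → ℝ) : (tU n μ)⁻¹ = tU n (-μ) := Units.ext rfl

lemma reflE_inv (f : F n) : (reflE n f)⁻¹ = reflE n f := by
  unfold reflE
  split_ifs
  exacts [rfl, inv_one]

lemma sgen_inv {k : ℕ} (hk : k ≠ 0) : (sgen n k)⁻¹ = sgen n k := by
  rw [sgen, if_neg hk, reflE_inv]

lemma reflE_mk_apply (u : Fin n → ℝ) (hu : u ⬝ᵥ u ≠ 0) (x : F n) :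
    (reflE n (u, 0) : Module.End ℝ (F n)) x = (x.1 - (2 / (u ⬝ᵥ u) * (x.1 ⬝ᵥ u)) • u, x.2) := by
  rw [reflE, dif_pos (show bform n (u, 0) (u, 0) ≠ 0 from hu)]
  ext <;> simp [bform, dotProduct]

lemma units_cast_mul_self (σ : ℤˣ) : ((σ : ℤ) : ℝ) * (σ : ℤ) = 1 := by
  exact_mod_cast Int.units_coe_mul_self σ

def signedPerm (π : Equiv.Perm (Fin n)) (ε : Fin n → ℤˣ) (v : Fin n → ℝ) : Fin n → ℝ :=
  fun i => (ε i : ℝ) * v (π i)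

lemma signedPerm_add (π : Equiv.Perm (Fin n)) (ε : Fin n → ℤˣ) (v w : Fin n → ℝ) :
    signedPerm π ε (v + w) = signedPerm π ε v + signedPerm π ε w := by
  ext i
  simp [signedPerm, mul_add]

lemma signedPerm_single (π : Equiv.Perm (Fin n)) (ε : Fin n → ℤˣ) (j : Fin n) (s : ℝ) :
    signedPerm π ε (Pi.single j s) = Pi.single (π⁻¹ j) ((ε (π⁻¹ j) : ℝ) * s) := by
  ext i
  simp only [signedPerm, Pi.single_apply, Equiv.Perm.eq_inv_iff_eq]
  split_ifs with h
  · subst h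
    simp
  · simp

lemma signedPerm_one_one (v : Fin n → ℝ) : signedPerm 1 1 v = v := by
  ext i
  simp [signedPerm]

lemma signedPerm_mul (π π' : Equiv.Perm (Fin n)) (v : Fin n → ℝ) :
    signedPerm (π * π') 1 v = signedPerm π' 1 (signedPerm π 1 v) := by
  ext i
  simp [signedPerm]

lemma sgen_apply_swap (a b : Fin n) (hab : (b : ℕ) = a + 1) (x : F n) :
    (sgen n (a + 1) : Module.End ℝ (F n)) x = (signedPerm (Equiv.swap a b) 1 x.1, x.2) := by
  have hb := b.isLt
  have hne : a ≠ b := fun h => by simp [h] at hab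
  have hb' : (a : ℕ) + 1 + 1 = b + 1 := by omega
  rw [sgen, if_neg (by omega), aRootF, if_neg (by omega), if_neg (by omega), hb', eps_succ,
    eps_succ, Prod.mk_sub_mk, sub_zero, reflE_mk_apply _ (by simp [hne])]
  ext i
  · rcases eq_or_ne i a with rfl | hia
    · simp [signedPerm, hne, one_add_one_eq_two]
    rcases eq_or_ne i b with rfl | hib
    · simp [signedPerm, hne.symm, one_add_one_eq_two]
    · simp [signedPerm, Equiv.swap_apply_of_ne_of_ne hia hib, hia, hib]
  · rfl

lemma sgen_apply_flip (t : Fin n) (ht : (t : ℕ) + 1 = n) (x : F n) :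
    (sgen n n : Module.End ℝ (F n)) x = (signedPerm 1 (Pi.mulSingle t (-1)) x.1, x.2) := by
  have heps : eps n n = (Pi.single t 1, 0) := by rw [← eps_succ, ht]
  have h2 : (2 : ℝ) • eps n n = (Pi.single t 2, 0) := by simp [heps, ← Pi.single_smul']
  rw [sgen, if_neg (by omega), aRootF, if_neg (by omega), if_pos rfl, h2,
    reflE_mk_apply _ (by simp)]
  ext i
  · by_cases hi : i = t
    · subst hi
      simp only [signedPerm, dotProduct_single, Pi.single_eq_same, div_self_mul_self',
        Pi.sub_apply, Pi.smul_apply, smul_eq_mul, Pi.mulSingle_eq_same, Units.val_neg,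
        Units.val_one, Int.cast_neg, Int.cast_one, Equiv.Perm.coe_one, id_eq]
      ring
    · simp [signedPerm, hi]
  · rfl

lemma sgen_eq_signedPerm {k : ℕ} (hk : k ∈ Icc 1 n) :
    ∃ π ε, ∀ x : F n, (sgen n k : Module.End ℝ (F n)) x = (signedPerm π ε x.1, x.2) := by
  obtain ⟨hk1, hkn⟩ := hk
  rcases hkn.lt_or_eq with hkn | rfl
  · obtain ⟨a, rfl⟩ : ∃ a : Fin n, k = a + 1 :=
      ⟨⟨k - 1, by omega⟩, (Nat.sub_add_cancel hk1).symm⟩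
    exact ⟨_, _, sgen_apply_swap a ⟨a + 1, hkn⟩ rfl⟩
  · exact ⟨_, _, sgen_apply_flip ⟨k - 1, by omega⟩ (Nat.sub_add_cancel hk1)⟩

lemma sgen_mem {k : ℕ} (hk : k ∈ Icc 1 n) : sgen n k ∈ WCvee n :=
  Subgroup.subset_closure (Or.inl ⟨k, hk, rfl⟩)

lemma neg_mem_PB {μ : Fin n → ℝ} (hμ : μ ∈ PB n) : -μ ∈ PB n := by
  obtain ⟨K, hK⟩ := hμ
  refine ⟨-K, fun i => ?_⟩
  obtain ⟨m, hm⟩ := hK i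
  exact ⟨-m, by rw [Pi.neg_apply, hm]; push_cast; ring⟩

lemma intCast_mem_PB (m : Fin n → ℤ) : (fun i => (m i : ℝ)) ∈ PB n :=
  ⟨0, fun i => ⟨m i, by simp⟩⟩

lemma const_half_mem_PB (K : ℤ) : (fun _ => (K : ℝ) / 2) ∈ PB n :=
  ⟨K, fun _ => ⟨0, by simp⟩⟩

lemma mapsTo_of_mem_WCvee {S : Set (F n)}
    (hperm : ∀ π ε, MapsTo (fun x : F n => (signedPerm π ε x.1, x.2)) S S)
    (htrans : ∀ μ ∈ PB n, MapsTo (fun x : F n => (x.1, x.2 - x.1 ⬝ᵥ μ)) S S)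
    {w : (Module.End ℝ (F n))ˣ} (hw : w ∈ WCvee n) : MapsTo (w : Module.End ℝ (F n)) S S := by
  have hgen : ∀ g ∈ sgen n '' Icc 1 n ∪ tU n '' PB n, MapsTo (g : Module.End ℝ (F n)) S S := by
    rintro _ (⟨k, hk, rfl⟩ | ⟨μ, hμ, rfl⟩)
    · obtain ⟨π, ε, h⟩ := sgen_eq_signedPerm hk
      rw [show ⇑(sgen n k : Module.End ℝ (F n)) = _ from funext h]
      exact hperm π ε
    · rw [show ⇑(tU n μ : Module.End ℝ (F n)) = _ from funext (tU_apply μ)]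
      exact htrans μ hμ
  induction hw using Subgroup.closure_induction'' with
  | mem g hg => exact hgen g hg
  | inv_mem g hg =>
    rcases hg with ⟨k, hk, rfl⟩ | ⟨μ, hμ, rfl⟩
    · rw [sgen_inv (Nat.one_le_iff_ne_zero.mp hk.1)]
      exact hgen _ (Or.inl ⟨k, hk, rfl⟩)
    · rw [tU_inv]
      exact hgen _ (Or.inr ⟨-μ, neg_mem_PB hμ, rfl⟩)
  | one => exact mapsTo_id S
  | mul g h _ _ hg hh => exact hg.comp hh

def shortRoots (n : ℕ) : Set (F n) :=
  {x | ∃ (j : Fin n) (σ : ℤˣ) (p : ℤ), x = (Pi.single j ((σ : ℤ) : ℝ), (p : ℝ) / 2)}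

def longRoots (n : ℕ) : Set (F n) :=
  {x | ∃ (j k : Fin n) (σ τ : ℤˣ) (r : ℤ), j ≠ k ∧
    x = (Pi.single j ((σ : ℤ) : ℝ) + Pi.single k ((τ : ℤ) : ℝ), (r : ℝ))}

lemma mapsTo_signedPerm_shortRoots (π : Equiv.Perm (Fin n)) (ε : Fin n → ℤˣ) :
    MapsTo (fun x : F n => (signedPerm π ε x.1, x.2)) (shortRoots n) (shortRoots n) := by
  rintro _ ⟨j, σ, p, rfl⟩
  exact ⟨π⁻¹ j, ε (π⁻¹ j) * σ, p, by simp [signedPerm_single]⟩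

lemma mapsTo_signedPerm_longRoots (π : Equiv.Perm (Fin n)) (ε : Fin n → ℤˣ) :
    MapsTo (fun x : F n => (signedPerm π ε x.1, x.2)) (longRoots n) (longRoots n) := by
  rintro _ ⟨j, k, σ, τ, r, hjk, rfl⟩
  exact ⟨π⁻¹ j, π⁻¹ k, ε (π⁻¹ j) * σ, ε (π⁻¹ k) * τ, r, π⁻¹.injective.ne hjk,
    by simp [signedPerm_add, signedPerm_single]⟩

lemma mapsTo_translate_shortRoots {μ : Fin n → ℝ} (hμ : μ ∈ PB n) :
    MapsTo (fun x : F n => (x.1, x.2 - x.1 ⬝ᵥ μ)) (shortRoots n) (shortRoots n) := by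
  rintro _ ⟨j, σ, p, rfl⟩
  obtain ⟨K, hK⟩ := hμ
  obtain ⟨m, hm⟩ := hK j
  refine ⟨j, σ, p - 2 * σ * m - σ * K, Prod.ext rfl ?_⟩
  simp only [single_dotProduct, hm]
  push_cast
  ring

-- The half-integral parts of `μ j` and `μ k` cancel because `σ + τ` is even.
lemma mapsTo_translate_longRoots {μ : Fin n → ℝ} (hμ : μ ∈ PB n) :
    MapsTo (fun x : F n => (x.1, x.2 - x.1 ⬝ᵥ μ)) (longRoots n) (longRoots n) := by
  rintro _ ⟨j, k, σ, τ, r, hjk, rfl⟩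
  obtain ⟨K, hK⟩ := hμ
  obtain ⟨mj, hmj⟩ := hK j
  obtain ⟨mk, hmk⟩ := hK k
  have hodd (u : ℤˣ) : Odd (u : ℤ) := by rcases Int.units_eq_one_or u with rfl | rfl <;> simp
  obtain ⟨e, he⟩ := (hodd σ).add_odd (hodd τ)
  have he' : ((σ : ℤ) : ℝ) + (τ : ℤ) = e + e := by exact_mod_cast he
  refine ⟨j, k, σ, τ, r - σ * mj - τ * mk - e * K, hjk, Prod.ext rfl ?_⟩
  simp only [add_dotProduct, single_dotProduct, hmj, hmk]
  push_cast
  linear_combination -(K / 2 : ℝ) * he'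

lemma disjoint_shortRoots_longRoots : Disjoint (shortRoots n) (longRoots n) := by
  rw [Set.disjoint_left]
  rintro _ ⟨j, σ, p, rfl⟩ ⟨a, b, σ', τ', r, hab, h⟩
  obtain ⟨h, -⟩ := Prod.mk.inj h
  have hsupp (i : Fin n)
      (hi : (Pi.single a (σ' : ℝ) + Pi.single b (τ' : ℝ) : Fin n → ℝ) i ≠ 0) : i = j := by
    by_contra hij
    rw [← h] at hi
    simp [hij] at hi
  exact hab ((hsupp a (by simp [hab])).trans (hsupp b (by simp [hab.symm])).symm)

lemma O1_union_O3_eq : O1 n ∪ O3 n = shortRoots n := by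
  ext x
  constructor
  · rintro (⟨i, h1, h2, r, rfl | rfl⟩ | ⟨i, h1, h2, r, rfl | rfl⟩) <;>
      obtain ⟨j, rfl⟩ : ∃ j : Fin n, i = j + 1 :=
        ⟨⟨i - 1, by omega⟩, (Nat.sub_add_cancel h1).symm⟩ <;>
      [exists j, 1, 2 * r; exists j, -1, 2 * r; exists j, 1, 2 * r + 1;
        exists j, -1, 2 * r + 1] <;>
      ext <;> simp [eps_succ, cvec, Pi.single_neg, add_div]
  · rintro ⟨j, σ, p, rfl⟩
    obtain ⟨r, rfl | rfl⟩ := Int.even_or_odd' p <;> [left; right] <;>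
      refine ⟨j + 1, by omega, j.isLt, r, ?_⟩ <;>
      obtain rfl | rfl := Int.units_eq_one_or σ <;> [left; right; left; right] <;>
      ext <;> simp [eps_succ, cvec, Pi.single_neg, add_div]

lemma O5_eq : O5 n = longRoots n := by
  ext x
  constructor
  · rintro ⟨i, i', h1, hii', h2, r, rfl | rfl | rfl | rfl⟩ <;>
      obtain ⟨j, rfl⟩ : ∃ j : Fin n, i = j + 1 :=
        ⟨⟨i - 1, by omega⟩, (Nat.sub_add_cancel h1).symm⟩ <;>
      obtain ⟨k, rfl⟩ : ∃ k : Fin n, i' = k + 1 :=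
        ⟨⟨i' - 1, by omega⟩, (Nat.sub_add_cancel (by omega)).symm⟩ <;>
      [exists j, k, 1, 1, r; exists j, k, 1, -1, r; exists j, k, -1, 1, r;
        exists j, k, -1, -1, r] <;>
      refine ⟨by rintro rfl; omega, ?_⟩ <;>
      ext <;> simp [eps_succ, cvec, Pi.single_neg, sub_eq_add_neg]
  · rintro ⟨j, k, σ, τ, r, hjk, rfl⟩
    wlog hlt : j < k generalizing j k σ τ
    · rw [add_comm]
      exact this k j τ σ hjk.symm (lt_of_le_of_ne (not_lt.mp hlt) hjk.symm)
    refine ⟨j + 1, k + 1, by omega, by simpa using hlt, k.isLt, r, ?_⟩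
    obtain rfl | rfl := Int.units_eq_one_or σ <;> obtain rfl | rfl := Int.units_eq_one_or τ <;>
      [left; (right; left); (right; right; left); (right; right; right)] <;>
      ext <;> simp [eps_succ, cvec, Pi.single_neg, sub_eq_add_neg]

lemma orbit_apply {w : (Module.End ℝ (F n))ˣ} (hw : w ∈ WCvee n) (x : F n) :
    orbit (WCvee n) ((w : Module.End ℝ (F n)) x) = orbit (WCvee n) x :=
  orbit_smul (⟨w, hw⟩ : WCvee n) x

lemma orbit_translate {μ : Fin n → ℝ} (hμ : μ ∈ PB n) (x : F n) :
    orbit (WCvee n) (x.1, x.2 - x.1 ⬝ᵥ μ) = orbit (WCvee n) x := by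
  rw [← tU_apply]
  exact orbit_apply (Subgroup.subset_closure (Or.inr ⟨μ, hμ, rfl⟩)) x

lemma orbit_signedPerm_perm (π : Equiv.Perm (Fin n)) (x : F n) :
    orbit (WCvee n) (signedPerm π 1 x.1, x.2) = orbit (WCvee n) x := by
  cases n with
  | zero => rw [Subsingleton.elim (signedPerm π 1 x.1) x.1]
  | succ m =>
    have hπ : π ∈ Submonoid.closure (range fun i : Fin m ↦ Equiv.swap i.castSucc i.succ) := by
      rw [Equiv.Perm.mclosure_swap_castSucc_succ]
      trivial
    induction hπ using Submonoid.closure_induction generalizing x with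
    | mem _ h =>
      obtain ⟨i, rfl⟩ := h
      rw [← sgen_apply_swap i.castSucc i.succ (by simp)]
      exact orbit_apply (sgen_mem ⟨by omega, by simp⟩) x
    | one => rw [signedPerm_one_one]
    | mul π π' _ _ hπ hπ' =>
      rw [signedPerm_mul]
      exact (hπ' (signedPerm π 1 x.1, x.2)).trans (hπ x)

lemma orbit_signedPerm_mulSingle (a : Fin n) (s : ℤˣ) (x : F n) :
    orbit (WCvee n) (signedPerm 1 (Pi.mulSingle a s) x.1, x.2) = orbit (WCvee n) x := by
  obtain rfl | rfl := Int.units_eq_one_or s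
  · rw [Pi.mulSingle_one, signedPerm_one_one]
  -- A sign change at `a` is the conjugate of the sign change `s_n` at the last coordinate `t`.
  have ha := a.isLt
  set t : Fin n := ⟨n - 1, by omega⟩
  have hflip : signedPerm 1 (Pi.mulSingle a (-1)) x.1 = signedPerm (Equiv.swap a t) 1
      (signedPerm 1 (Pi.mulSingle t (-1)) (signedPerm (Equiv.swap a t) 1 x.1)) := by
    ext i
    simp [signedPerm, Pi.mulSingle_apply, Equiv.swap_apply_eq_iff]
  rw [hflip, orbit_signedPerm_perm (Equiv.swap a t) (_, x.2),
    ← sgen_apply_flip t (show n - 1 + 1 = n by omega) (signedPerm (Equiv.swap a t) 1 x.1, x.2),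
    orbit_apply (sgen_mem ⟨by omega, le_rfl⟩), orbit_signedPerm_perm]

lemma mem_orbit_of_mem_shortRoots (j : Fin n) {x : F n} (hx : x ∈ shortRoots n) :
    x ∈ orbit (WCvee n) (Pi.single j 1, 0) := by
  obtain ⟨a, σ, p, rfl⟩ := hx
  rw [← orbit_eq_iff]
  calc orbit (WCvee n) ((Pi.single a (σ : ℝ) : Fin n → ℝ), (p : ℝ) / 2)
      = orbit (WCvee n) ((Pi.single a (σ : ℝ) : Fin n → ℝ), 0) := by
        rw [← orbit_translate (const_half_mem_PB (σ * p))]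
        congr 1
        ext <;> simp [single_dotProduct, ← mul_div_assoc, ← mul_assoc, units_cast_mul_self]
    _ = orbit (WCvee n) (Pi.single a 1, 0) := by
        rw [← orbit_signedPerm_mulSingle a σ, signedPerm_single, inv_one]
        congr 1
        ext <;> simp [units_cast_mul_self]
    _ = orbit (WCvee n) (Pi.single j 1, 0) := by
        rw [← orbit_signedPerm_perm (Equiv.swap a j)]
        congr 1
        ext <;> simp [signedPerm_single]

lemma mem_orbit_of_mem_longRoots {j k : Fin n} (hjk : j ≠ k) {x : F n} (hx : x ∈ longRoots n) :
    x ∈ orbit (WCvee n) (Pi.single j 1 + Pi.single k 1, 0) := by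
  obtain ⟨a, b, σ, τ, r, hab, rfl⟩ := hx
  have hb : Equiv.swap a j b ≠ j := by
    simpa using (Equiv.swap a j).injective.ne hab.symm
  rw [← orbit_eq_iff]
  calc orbit (WCvee n) ((Pi.single a (σ : ℝ) + Pi.single b (τ : ℝ) : Fin n → ℝ), (r : ℝ))
      = orbit (WCvee n) ((Pi.single a (σ : ℝ) + Pi.single b (τ : ℝ) : Fin n → ℝ), 0) := by
        rw [← orbit_translate (intCast_mem_PB (Pi.single a (σ * r)))]
        congr 1
        ext <;>
          simp [add_dotProduct, single_dotProduct, hab.symm, ← mul_assoc, units_cast_mul_self]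
    _ = orbit (WCvee n) ((Pi.single a 1 + Pi.single b (τ : ℝ) : Fin n → ℝ), 0) := by
        rw [← orbit_signedPerm_mulSingle a σ, signedPerm_add, signedPerm_single,
          signedPerm_single, inv_one]
        congr 1
        ext <;> simp [hab.symm, units_cast_mul_self]
    _ = orbit (WCvee n) ((Pi.single a 1 + Pi.single b 1 : Fin n → ℝ), 0) := by
        rw [← orbit_signedPerm_mulSingle b τ, signedPerm_add, signedPerm_single,
          signedPerm_single, inv_one]
        congr 1
        ext <;> simp [hab, units_cast_mul_self]
    _ = orbit (WCvee n) ((Pi.single j 1 + Pi.single (Equiv.swap a j b) 1 : Fin n → ℝ), 0) := by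
        rw [← orbit_signedPerm_perm (Equiv.swap a j)]
        congr 1
        ext <;> simp [signedPerm_add, signedPerm_single]
    _ = orbit (WCvee n) (Pi.single j 1 + Pi.single k 1, 0) := by
        rw [← orbit_signedPerm_perm (Equiv.swap (Equiv.swap a j b) k)]
        congr 1
        ext <;> simp [signedPerm_add, signedPerm_single, Equiv.swap_apply_of_ne_of_ne hb.symm hjk]

lemma shortRoots_subset_orbit {x : F n} (hx : x ∈ shortRoots n) :
    shortRoots n ⊆ orbit (WCvee n) x := by
  have ⟨j, _⟩ := hx
  intro y hy
  rw [orbit_eq_iff.mpr (mem_orbit_of_mem_shortRoots j hx)]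
  exact mem_orbit_of_mem_shortRoots j hy

lemma longRoots_subset_orbit {x : F n} (hx : x ∈ longRoots n) :
    longRoots n ⊆ orbit (WCvee n) x := by
  have ⟨j, k, _, _, _, hjk, _⟩ := hx
  intro y hy
  rw [orbit_eq_iff.mpr (mem_orbit_of_mem_longRoots hjk hx)]
  exact mem_orbit_of_mem_longRoots hjk hy

lemma exists_apply_eq_of_mem_orbit {a b : F n} (h : b ∈ orbit (WCvee n) a) :
    ∃ w ∈ WCvee n, w.val a = b := by
  obtain ⟨w, rfl⟩ := h
  exact ⟨w, w.2, rfl⟩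

end

theorem WCvee_orbits_general (n : ℕ) :
    (∀ w ∈ WCvee n, ∀ a ∈ O1 n ∪ O3 n, w.val a ∈ O1 n ∪ O3 n) ∧
    (∀ w ∈ WCvee n, ∀ a ∈ O5 n, w.val a ∈ O5 n) ∧
    Disjoint (O1 n ∪ O3 n) (O5 n) ∧
    (∀ a ∈ O1 n ∪ O3 n, ∀ b ∈ O1 n ∪ O3 n, ∃ w ∈ WCvee n, w.val a = b) ∧
    (∀ a ∈ O5 n, ∀ b ∈ O5 n, ∃ w ∈ WCvee n, w.val a = b) := by
  rw [O1_union_O3_eq, O5_eq]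
  exact ⟨fun w hw => mapsTo_of_mem_WCvee mapsTo_signedPerm_shortRoots
      (fun _ => mapsTo_translate_shortRoots) hw,
    fun w hw => mapsTo_of_mem_WCvee mapsTo_signedPerm_longRoots
      (fun _ => mapsTo_translate_longRoots) hw,
    disjoint_shortRoots_longRoots,
    fun a ha b hb => exists_apply_eq_of_mem_orbit (shortRoots_subset_orbit ha hb),
    fun a ha b hb => exists_apply_eq_of_mem_orbit (longRoots_subset_orbit ha hb)⟩

/-- `W^{C∨} = t(P_{B_n}) ⋊ W_0` preserves `S^{C∨} = O_1 ∪ O_3 ∪ O_5`, with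
orbits exactly `O_1 ∪ O_3` and `O_5`. -/
theorem WCvee_orbits (n : ℕ) (hn : 2 ≤ n) :
    (∀ w ∈ WCvee n, ∀ a ∈ O1 n ∪ O3 n, w.val a ∈ O1 n ∪ O3 n) ∧
    (∀ w ∈ WCvee n, ∀ a ∈ O5 n, w.val a ∈ O5 n) ∧
    Disjoint (O1 n ∪ O3 n) (O5 n) ∧
    (∀ a ∈ O1 n ∪ O3 n, ∀ b ∈ O1 n ∪ O3 n, ∃ w ∈ WCvee n, w.val a = b) ∧
    (∀ a ∈ O5 n, ∀ b ∈ O5 n, ∃ w ∈ WCvee n, w.val a = b) :=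
  WCvee_orbits_general n

end CvC
end
end
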